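/- Let u : ℝ³₊ → ℝ³ be a smooth divergence-free vector field satisfying u₃ = 0 and ∂u₁/∂x₃ = ∂u₂/∂x₃ = 0 on {x₃ = 0}. Then for all indices j, k ∈ {1,2,3}, D_{jk}(u) ∂₃ D_{jk}(u) = 0 on {x₃ = 0}; equivalently, ∂₃(|D(u)|²) = 0 on the boundary. -/

import Mathlib

open Real

/-- Partial derivative `∂f/∂xᵢ`. -/
noncomputable def pd (i : Fin 3) (f : (Fin 3 → ℝ) → ℝ) (x : Fin 3 → ℝ) : ℝ :=
  fderiv ℝ f x (Pi.single i 1)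

/-- The symmetric gradient `D_{jk}(u) = (∂u_j/∂x_k + ∂u_k/∂x_j)/2`. -/
noncomputable def Dsym (u : (Fin 3 → ℝ) → (Fin 3 → ℝ)) (j k : Fin 3) (x : Fin 3 → ℝ) : ℝ :=
  (pd k (fun y => u y j) x + pd j (fun y => u y k) x) / 2

lemma pd_contDiff {f : (Fin 3 → ℝ) → ℝ} (hf : ContDiff ℝ (⊤ : ℕ∞) f) (i : Fin 3) :
    ContDiff ℝ (⊤ : ℕ∞) (pd i f) := by
  have h := (hf.fderiv_right (m := (⊤ : ℕ∞)) (by simp)).clm_apply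
    (contDiff_const (c := (Pi.single i 1 : Fin 3 → ℝ)))
  exact h

/-- Tangential derivative of a function vanishing on the boundary vanishes. -/
lemma pd_tangent_zero {f : (Fin 3 → ℝ) → ℝ} {x : Fin 3 → ℝ}
    (hf : DifferentiableAt ℝ f x)
    (h0 : ∀ y : Fin 3 → ℝ, y 2 = 0 → f y = 0) {i : Fin 3} (hi : i ≠ 2)
    (hx : x 2 = 0) : pd i f x = 0 := by
  have hv2 : (Pi.single i 1 : Fin 3 → ℝ) 2 = 0 := Pi.single_eq_of_ne (Ne.symm hi) 1
  have hline : ∀ t : ℝ, f (x + t • (Pi.single i 1 : Fin 3 → ℝ)) = 0 := by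
    intro t
    apply h0
    simp [hv2, hx]
  have hcurve : HasDerivAt (fun t : ℝ => x + t • (Pi.single i 1 : Fin 3 → ℝ))
      (Pi.single i 1) 0 := by
    simpa using ((hasDerivAt_id (0 : ℝ)).smul_const (Pi.single i 1 : Fin 3 → ℝ)).const_add x
  have hcomp : HasDerivAt (fun t : ℝ => f (x + t • (Pi.single i 1 : Fin 3 → ℝ)))
      (fderiv ℝ f x (Pi.single i 1)) 0 := by
    have h1 : HasFDerivAt f (fderiv ℝ f x) ((fun t : ℝ => x + t • (Pi.single i 1 : Fin 3 → ℝ)) 0) := by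
      simpa using hf.hasFDerivAt
    exact h1.comp_hasDerivAt 0 hcurve
  have hzero : HasDerivAt (fun t : ℝ => f (x + t • (Pi.single i 1 : Fin 3 → ℝ))) 0 0 := by
    have heq : (fun t : ℝ => f (x + t • (Pi.single i 1 : Fin 3 → ℝ))) = fun _ => 0 :=
      funext hline
    rw [heq]
    exact hasDerivAt_const 0 0
  have := hcomp.unique hzero
  simpa [pd] using this

lemma fderiv_fderiv_apply {f : (Fin 3 → ℝ) → ℝ} (hf : ContDiff ℝ (⊤ : ℕ∞) f)
    (x v w : Fin 3 → ℝ) :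
    fderiv ℝ (fun y => fderiv ℝ f y w) x v = fderiv ℝ (fderiv ℝ f) x v w := by
  have hc : DifferentiableAt ℝ (fderiv ℝ f) x :=
    ((hf.fderiv_right (m := (⊤ : ℕ∞)) (by simp)).differentiable (by simp)) x
  have h := fderiv_clm_apply hc (differentiableAt_const w)
  rw [show (fun y => fderiv ℝ f y w) = (fun y => (fderiv ℝ f y) ((fun _ => w) y)) from rfl, h]
  simp

lemma pd_comm {f : (Fin 3 → ℝ) → ℝ} (hf : ContDiff ℝ (⊤ : ℕ∞) f) (a b : Fin 3) (x : Fin 3 → ℝ) :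
    pd a (pd b f) x = pd b (pd a f) x := by
  have hd : Differentiable ℝ f := hf.differentiable (by simp)
  have hf' : Differentiable ℝ (fderiv ℝ f) := (hf.fderiv_right (m := (⊤ : ℕ∞)) (by simp)).differentiable (by simp)
  have hsym := second_derivative_symmetric (f := f) (f' := fderiv ℝ f)
    (fun y => (hd y).hasFDerivAt) (hf' x).hasFDerivAt (Pi.single a 1) (Pi.single b 1)
  have h1 : pd a (pd b f) x = fderiv ℝ (fderiv ℝ f) x (Pi.single a 1) (Pi.single b 1) :=
    fderiv_fderiv_apply hf x _ _
  have h2 : pd b (pd a f) x = fderiv ℝ (fderiv ℝ f) x (Pi.single b 1) (Pi.single a 1) :=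
    fderiv_fderiv_apply hf x _ _
  rw [h1, h2, hsym]

lemma pd_add {A B : (Fin 3 → ℝ) → ℝ} {x : Fin 3 → ℝ} (hA : DifferentiableAt ℝ A x)
    (hB : DifferentiableAt ℝ B x) (i : Fin 3) :
    pd i (fun y => A y + B y) x = pd i A x + pd i B x := by
  unfold pd
  rw [fderiv_fun_add hA hB]
  simp

lemma pd_neg {A : (Fin 3 → ℝ) → ℝ} {x : Fin 3 → ℝ} (i : Fin 3) :
    pd i (fun y => -A y) x = -pd i A x := by
  unfold pd
  rw [fderiv_fun_neg]
  simp

lemma pd_half_add {A B : (Fin 3 → ℝ) → ℝ} {x : Fin 3 → ℝ} (hA : DifferentiableAt ℝ A x)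
    (hB : DifferentiableAt ℝ B x) (i : Fin 3) :
    pd i (fun y => (A y + B y) / 2) x = (pd i A x + pd i B x) / 2 := by
  have heq : (fun y => (A y + B y) / 2) = fun y => (A y + B y) * (2 : ℝ)⁻¹ := by
    funext y; ring
  unfold pd
  rw [heq, fderiv_mul_const (c := fun y => A y + B y) (hA.add hB), fderiv_fun_add hA hB]
  simp
  ring

lemma pd_mul {A B : (Fin 3 → ℝ) → ℝ} {x : Fin 3 → ℝ} (hA : DifferentiableAt ℝ A x)
    (hB : DifferentiableAt ℝ B x) (i : Fin 3) :
    pd i (fun y => A y * B y) x = A x * pd i B x + B x * pd i A x := by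
  unfold pd
  rw [fderiv_fun_mul hA hB]
  simp

lemma pd_sum {ι : Type*} {s : Finset ι} {F : ι → (Fin 3 → ℝ) → ℝ} {x : Fin 3 → ℝ}
    (h : ∀ j ∈ s, DifferentiableAt ℝ (F j) x) (i : Fin 3) :
    pd i (fun y => ∑ j ∈ s, F j y) x = ∑ j ∈ s, pd i (F j) x := by
  unfold pd
  rw [fderiv_fun_sum h]
  simp

theorem stmt7 (u : (Fin 3 → ℝ) → (Fin 3 → ℝ)) (hu : ContDiff ℝ (⊤ : ℕ∞) u)
    (hdiv : ∀ x, ∑ i, pd i (fun y => u y i) x = 0)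
    (hbc : ∀ x : Fin 3 → ℝ, x 2 = 0 →
      u x 2 = 0 ∧ pd 2 (fun y => u y 0) x = 0 ∧ pd 2 (fun y => u y 1) x = 0) :
    (∀ j k : Fin 3, ∀ x : Fin 3 → ℝ, x 2 = 0 →
      Dsym u j k x * pd 2 (Dsym u j k) x = 0) ∧
    (∀ x : Fin 3 → ℝ, x 2 = 0 →
      pd 2 (fun y => ∑ j, ∑ k, (Dsym u j k y) ^ 2) x = 0) := by
  have hui : ∀ i : Fin 3, ContDiff ℝ (⊤ : ℕ∞) (fun y => u y i) := fun i => contDiff_pi.1 hu i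
  have hpdui : ∀ i j : Fin 3, ContDiff ℝ (⊤ : ℕ∞) (pd i (fun y => u y j)) := fun i j =>
    pd_contDiff (hui j) i
  -- tangential derivative (index k ≠ 2) of ∂₂ u_j (j ≠ 2) vanishes on the boundary
  have hG : ∀ (j k : Fin 3), j ≠ 2 → k ≠ 2 → ∀ x : Fin 3 → ℝ, x 2 = 0 →
      pd k (pd 2 (fun y => u y j)) x = 0 := by
    intro j k hj hk x hx
    refine pd_tangent_zero (((hpdui 2 j).differentiable (by simp)) x) ?_ hk hx
    intro y hy
    fin_cases j
    · exact (hbc y hy).2.1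
    · exact (hbc y hy).2.2
    · exact absurd rfl hj
  -- tangential derivatives of u₂ vanish on the boundary
  have hT : ∀ (k : Fin 3), k ≠ 2 → ∀ x : Fin 3 → ℝ, x 2 = 0 →
      pd k (fun y => u y 2) x = 0 := by
    intro k hk x hx
    exact pd_tangent_zero (((hui 2).differentiable (by simp)) x)
      (fun y hy => (hbc y hy).1) hk hx
  -- ∂₂ D_{jk} = 0 on the boundary for tangential indices
  have hTT : ∀ (j k : Fin 3), j ≠ 2 → k ≠ 2 → ∀ x : Fin 3 → ℝ, x 2 = 0 →
      pd 2 (Dsym u j k) x = 0 := by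
    intro j k hj hk x hx
    have heq : Dsym u j k = fun y =>
        (pd k (fun z => u z j) y + pd j (fun z => u z k) y) / 2 := rfl
    rw [heq, pd_half_add (((hpdui k j).differentiable (by simp)) x)
      (((hpdui j k).differentiable (by simp)) x),
      pd_comm (hui j) 2 k x, pd_comm (hui k) 2 j x, hG j k hj hk x hx, hG k j hk hj x hx]
    norm_num
  -- ∂₂ D_{33} = 0 on the boundary, using the divergence
  have hTT2 : ∀ x : Fin 3 → ℝ, x 2 = 0 → pd 2 (Dsym u 2 2) x = 0 := by
    intro x hx
    have heq : Dsym u 2 2 = pd 2 (fun y => u y 2) := by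
      funext y
      show (pd 2 (fun z => u z 2) y + pd 2 (fun z => u z 2) y) / 2 = pd 2 (fun z => u z 2) y
      ring
    have hdiv' : pd 2 (fun y => u y 2) =
        fun y => -(pd 0 (fun z => u z 0) y + pd 1 (fun z => u z 1) y) := by
      funext y
      have := hdiv y
      rw [Fin.sum_univ_three] at this
      linarith
    rw [heq, hdiv']
    have hneg : (fun y => -(pd 0 (fun z => u z 0) y + pd 1 (fun z => u z 1) y)) =
        fun y => -((fun z => pd 0 (fun w => u w 0) z + pd 1 (fun w => u w 1) z) y) := rfl
    rw [hneg, pd_neg, pd_add (((hpdui 0 0).differentiable (by simp)) x)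
      (((hpdui 1 1).differentiable (by simp)) x),
      pd_comm (hui 0) 2 0 x, pd_comm (hui 1) 2 1 x,
      hG 0 0 (by decide) (by decide) x hx, hG 1 1 (by decide) (by decide) x hx]
    norm_num
  -- the D entries with exactly one normal index vanish on the boundary
  have hD02 : ∀ x : Fin 3 → ℝ, x 2 = 0 → Dsym u 0 2 x = 0 := by
    intro x hx
    simp only [Dsym]
    rw [(hbc x hx).2.1, hT 0 (by decide) x hx]
    norm_num
  have hD12 : ∀ x : Fin 3 → ℝ, x 2 = 0 → Dsym u 1 2 x = 0 := by
    intro x hx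
    simp only [Dsym]
    rw [(hbc x hx).2.2, hT 1 (by decide) x hx]
    norm_num
  have hD20 : ∀ x : Fin 3 → ℝ, x 2 = 0 → Dsym u 2 0 x = 0 := by
    intro x hx
    simp only [Dsym]
    rw [(hbc x hx).2.1, hT 0 (by decide) x hx]
    norm_num
  have hD21 : ∀ x : Fin 3 → ℝ, x 2 = 0 → Dsym u 2 1 x = 0 := by
    intro x hx
    simp only [Dsym]
    rw [(hbc x hx).2.2, hT 1 (by decide) x hx]
    norm_num
  have hpart1 : ∀ j k : Fin 3, ∀ x : Fin 3 → ℝ, x 2 = 0 →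
      Dsym u j k x * pd 2 (Dsym u j k) x = 0 := by
    intro j k x hx
    fin_cases j <;> fin_cases k
    · exact mul_eq_zero_of_right _ (hTT 0 0 (by decide) (by decide) x hx)
    · exact mul_eq_zero_of_right _ (hTT 0 1 (by decide) (by decide) x hx)
    · exact mul_eq_zero_of_left (hD02 x hx) _
    · exact mul_eq_zero_of_right _ (hTT 1 0 (by decide) (by decide) x hx)
    · exact mul_eq_zero_of_right _ (hTT 1 1 (by decide) (by decide) x hx)
    · exact mul_eq_zero_of_left (hD12 x hx) _
    · exact mul_eq_zero_of_left (hD20 x hx) _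
    · exact mul_eq_zero_of_left (hD21 x hx) _
    · exact mul_eq_zero_of_right _ (hTT2 x hx)
  refine ⟨hpart1, ?_⟩
  intro x hx
  have hDc : ∀ j k : Fin 3, ContDiff ℝ (⊤ : ℕ∞) (Dsym u j k) := by
    intro j k
    have : ContDiff ℝ (⊤ : ℕ∞) (fun y =>
        (pd k (fun z => u z j) y + pd j (fun z => u z k) y) / 2) :=
      ((hpdui k j).add (hpdui j k)).div_const 2
    exact this
  have hDd : ∀ j k : Fin 3, Differentiable ℝ (Dsym u j k) := fun j k =>
    (hDc j k).differentiable (by simp)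
  have hsqd : ∀ (j k : Fin 3) (y : Fin 3 → ℝ),
      DifferentiableAt ℝ (fun z => (Dsym u j k z) ^ 2) y := fun j k y =>
    ((hDd j k) y).pow 2
  rw [pd_sum (F := fun j => fun y => ∑ k, (Dsym u j k y) ^ 2)
    (fun j _ => DifferentiableAt.fun_sum (fun k _ => hsqd j k x)) 2]
  refine Finset.sum_eq_zero fun j _ => ?_
  rw [pd_sum (F := fun k => fun y => (Dsym u j k y) ^ 2)
    (fun k _ => hsqd j k x) 2]
  refine Finset.sum_eq_zero fun k _ => ?_
  have hsq : (fun y => (Dsym u j k y) ^ 2) = fun y => Dsym u j k y * Dsym u j k y := by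
    funext y; ring
  rw [hsq, pd_mul ((hDd j k) x) ((hDd j k) x) 2]
  have := hpart1 j k x hx
  linarith
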